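/- arXiv:2202.08683 — 5 statements merged into one kernel-verified Lean document; each statement's English description precedes it below -/
import Mathlib

section
/- Let ρ < 0 and λ ≥ μ ≥ ν be reals with λ+μ+ν < 0 and μ+ν < 0. Then J := λ(μ²+ν²) − (μ+ν)μν − (1/(2(1−2ρ)))(μ+ν)(μ²+ν²) − (1/(2(1−2ρ)))λ(μ+ν)² + (ρ/(1−2ρ))(μ+ν)²(λ+μ+ν) ≥ 0. -/
theorem stmt_4 (ρ l m n : ℝ) (hρ : ρ < 0) (h1 : l ≥ m) (h2 : m ≥ n)
    (htr : l + m + n < 0) (hmn : m + n < 0) :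
    l*(m^2 + n^2) - (m + n)*m*n - (1/(2*(1 - 2*ρ)))*(m + n)*(m^2 + n^2)
      - (1/(2*(1 - 2*ρ)))*l*(m + n)^2 + (ρ/(1 - 2*ρ))*(m + n)^2*(l + m + n) ≥ 0 := by
  have hn : n < 0 := by linarith
  have hD : (0:ℝ) < 1 - 2*ρ := by linarith
  have hg : l*(m-n)^2 - (m+n)^3 ≥ 0 := by
    nlinarith [mul_nonneg (sub_nonneg.2 h1) (sq_nonneg (m-n)),
      mul_nonneg (neg_nonneg.2 hn.le) (sq_nonneg m),
      mul_nonneg (neg_nonneg.2 hn.le) (sq_nonneg (m+n))]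
  have hh : l*(m-n)^2 - (m+n)*(m^2+4*m*n+n^2) ≥ 0 := by
    nlinarith [mul_nonneg (sub_nonneg.2 h1) (sq_nonneg (m-n)),
      mul_nonneg (neg_nonneg.2 hn.le) (sq_nonneg m),
      mul_nonneg (neg_nonneg.2 hn.le) (sq_nonneg (m+n))]
  have key : l*(m^2 + n^2) - (m + n)*m*n - (1/(2*(1 - 2*ρ)))*(m + n)*(m^2 + n^2)
      - (1/(2*(1 - 2*ρ)))*l*(m + n)^2 + (ρ/(1 - 2*ρ))*(m + n)^2*(l + m + n)
      = (1/(2*(1 - 2*ρ))) * ((l*(m-n)^2 - (m+n)^3)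
          + (-2*ρ) * (l*(m-n)^2 - (m+n)*(m^2+4*m*n+n^2))) := by
    field_simp
    ring
  rw [key]
  apply mul_nonneg (by positivity)
  have : (0:ℝ) ≤ -2*ρ := by linarith
  nlinarith [mul_nonneg this hh]
end

section
/- Let ρ < 0 and λ ≥ μ ≥ ν be reals with λ+μ+ν ≥ 0 and μ+ν < 0. Then J := λ(μ²+ν²) − (μ+ν)μν − (1/(2(1−2ρ)))(μ+ν)(μ²+ν²) − (1/(2(1−2ρ)))λ(μ+ν)² + (ρ/(1−2ρ))(μ+ν)²(λ+μ+ν) satisfies J ≥ (ρ/(1−2ρ))(μ+ν)³ ≥ 0. -/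
theorem stmt_5 (ρ l m n : ℝ) (hρ : ρ < 0) (h1 : l ≥ m) (h2 : m ≥ n)
    (htr : l + m + n ≥ 0) (hmn : m + n < 0) :
    l*(m^2 + n^2) - (m + n)*m*n - (1/(2*(1 - 2*ρ)))*(m + n)*(m^2 + n^2)
      - (1/(2*(1 - 2*ρ)))*l*(m + n)^2 + (ρ/(1 - 2*ρ))*(m + n)^2*(l + m + n)
      ≥ (ρ/(1 - 2*ρ))*(m + n)^3 ∧ (ρ/(1 - 2*ρ))*(m + n)^3 ≥ 0 := by
  have hd : (0:ℝ) < 1 - 2*ρ := by linarith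
  have hE : (1-2*ρ)*l*(m-n)^2 - (m+n)^3 + 4*ρ*(m+n)*m*n ≥ 0 := by
    nlinarith [sq_nonneg (m-n), mul_nonneg (mul_nonneg hd.le (by linarith : (0:ℝ) ≤ l + m + n)) (sq_nonneg (m-n)), mul_pos (neg_pos.mpr hρ) (neg_pos.mpr hmn), sq_nonneg (m+n), mul_nonneg (mul_nonneg (neg_pos.mpr hmn).le (neg_pos.mpr hρ).le) (sq_nonneg (m+n)), mul_nonneg (mul_nonneg (neg_pos.mpr hmn).le (neg_pos.mpr hρ).le) (sq_nonneg (m-n))]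
  constructor
  · rw [ge_iff_le, ← sub_nonneg]
    have h2d : (0:ℝ) < 2*(1-2*ρ) := by linarith
    rw [← mul_nonneg_iff_of_pos_left h2d]
    have : 2*(1-2*ρ) * (l*(m^2 + n^2) - (m + n)*m*n - (1/(2*(1 - 2*ρ)))*(m + n)*(m^2 + n^2)
      - (1/(2*(1 - 2*ρ)))*l*(m + n)^2 + (ρ/(1 - 2*ρ))*(m + n)^2*(l + m + n)
      - (ρ/(1 - 2*ρ))*(m + n)^3) = (1-2*ρ)*l*(m-n)^2 - (m+n)^3 + 4*ρ*(m+n)*m*n := by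
      field_simp
      ring
    linarith [this ▸ hE]
  · have ht : ρ/(1-2*ρ) ≤ 0 := div_nonpos_of_nonpos_of_nonneg hρ.le hd.le
    have hs : (m+n)^3 ≤ 0 := Odd.pow_nonpos (⟨1, by norm_num⟩) hmn.le
    nlinarith [mul_nonneg (neg_nonneg.mpr ht) (neg_nonneg.mpr hs)]
end

section
/- Let η > 0, ρ ∈ (−1/η, 0), and set θ = −1/(2ρ). Let λ ≥ μ ≥ ν be reals with ν < 0 and μ + ν ≥ 0 (so λ ≥ μ ≥ −ν > 0). Then the quantity I := −2ν(λ²+μ²) + 2λμ(λ+μ) − 2θν(ν² + λμ − 2ρν(λ+μ+ν)) + 2θ(1+ηρ)ν³ is nonnegative. -/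
theorem stmt_8 (η ρ l m n : ℝ) (hη : η > 0) (hρ1 : -1/η < ρ) (hρ2 : ρ < 0)
    (h1 : l ≥ m) (h2 : m ≥ n) (hn : n < 0) (hmn : m + n ≥ 0) :
    -2*n*(l^2 + m^2) + 2*l*m*(l + m)
      - 2*(-1/(2*ρ))*n*(n^2 + l*m - 2*ρ*n*(l + m + n))
      + 2*(-1/(2*ρ))*(1 + η*ρ)*n^3 ≥ 0 := by
  have hρ : ρ ≠ 0 := ne_of_lt hρ2
  have hkey : -2*n*(l^2 + m^2) + 2*l*m*(l + m)
      - 2*(-1/(2*ρ))*n*(n^2 + l*m - 2*ρ*n*(l + m + n))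
      + 2*(-1/(2*ρ))*(1 + η*ρ)*n^3
      = (-2*n*(l^2 + m^2) + 2*l*m*(l + m) - 2*n^2*(l+m+n) - η*n^3)
        + (-1/ρ) * ((-n)*(l*m)) := by
    field_simp
    ring
  rw [hkey]
  have hinv : -1/ρ > 0 := by
    rw [neg_div]
    exact neg_pos.2 (div_neg_of_pos_of_neg one_pos hρ2)
  have hm : m ≥ -n := by linarith
  have hl : l > 0 := by linarith
  have hlm : l*m > 0 := by nlinarith
  have h2' : (-1/ρ) * ((-n)*(l*m)) ≥ 0 := mul_nonneg hinv.le (mul_nonneg (by linarith) hlm.le)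
  nlinarith [mul_nonneg (mul_nonneg (by linarith : (0:ℝ) ≤ -n) (by linarith : (0:ℝ) ≤ m+n)) (by linarith : (0:ℝ) ≤ l+m), mul_pos hlm (by linarith : (0:ℝ) < l+m), mul_nonneg (mul_nonneg hl.le (by linarith : (0:ℝ) ≤ m+n)) (by nlinarith : (0:ℝ) ≤ l*m + n*n), sq_nonneg n, mul_pos hη (mul_pos (mul_pos (neg_pos.2 hn) (neg_pos.2 hn)) (neg_pos.2 hn))]
end

section
/- Let ρ ∈ [0, 1/4) and λ ≥ μ ≥ ν be reals with λ < 0 and 2μ ≤ ν. Then 2λ²(μ−ν) + 2μ²(λ−ν) + 2(4ρ−1)νμλ + 4ρνλ(ν−2μ) ≥ 0. -/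
theorem stmt_12 (ρ l m n : ℝ) (hρ1 : 0 ≤ ρ) (hρ2 : ρ < 1/4)
    (h1 : l ≥ m) (h2 : m ≥ n) (hl : l < 0) (hmn : 2*m ≤ n) :
    2*l^2*(m - n) + 2*m^2*(l - n) + 2*(4*ρ - 1)*n*m*l + 4*ρ*n*l*(n - 2*m) ≥ 0 := by
  have hn : n < 0 := lt_of_le_of_lt (h2.trans h1) hl
  nlinarith [mul_nonneg (sq_nonneg l) (sub_nonneg.2 h2),
    mul_nonneg (sq_nonneg m) (sub_nonneg.2 (h2.trans h1)),
    mul_nonneg (le_of_lt (mul_pos_of_neg_of_neg hl hn)) (sub_nonneg.2 hmn),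
    mul_nonneg (mul_nonneg (by linarith : (0:ℝ) ≤ 1/4 - ρ) (by linarith : (0:ℝ) ≤ -l)) (sq_nonneg n)]
end

section
/- Let ρ < 0 and suppose λ(t) ≥ μ(t) ≥ ν(t) solve λ' = 2λ²+2μν−4ρλ(λ+μ+ν), μ' = 2μ²+2λν−4ρμ(λ+μ+ν), ν' = 2ν²+2λμ−4ρν(λ+μ+ν) on an interval where μ+ν < 0. Then the function Λ(t) = −λ/(μ+ν) − (1/(2(1−2ρ))) log(−μ−ν) satisfies Λ' = 2(μ+ν)^{-2} J, where J = λ(μ²+ν²) − (μ+ν)μν − (1/(2(1−2ρ)))(μ+ν)(μ²+ν²) − (1/(2(1−2ρ)))λ(μ+ν)² + (ρ/(1−2ρ))(μ+ν)²(λ+μ+ν). -/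
theorem hasDerivAt_neg_div_sub_mul_log_neg {f g : ℝ → ℝ} {f' g' t : ℝ} (c : ℝ)
    (hf : HasDerivAt f f' t) (hg : HasDerivAt g g' t) (hg0 : g t ≠ 0) :
    HasDerivAt (fun s => -f s / g s - c * Real.log (-g s))
      ((f t * g' - f' * g t) / g t ^ 2 - c * (g' / g t)) t := by
  have hquot := hf.neg.div hg hg0
  have hlog := (hg.neg.log (neg_ne_zero.2 hg0)).const_mul c
  refine (hquot.sub hlog).congr_deriv ?_
  simp only [Pi.neg_apply, neg_div_neg_eq]
  ring

theorem stmt_15_general (ρ : ℝ) (hρ : ρ < 0) (I : Set ℝ)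
    (l m n : ℝ → ℝ)
    (hl : ∀ t ∈ I, HasDerivAt l
      (2*(l t)^2 + 2*(m t)*(n t) - 4*ρ*(l t)*(l t + m t + n t)) t)
    (hm : ∀ t ∈ I, HasDerivAt m
      (2*(m t)^2 + 2*(l t)*(n t) - 4*ρ*(m t)*(l t + m t + n t)) t)
    (hn : ∀ t ∈ I, HasDerivAt n
      (2*(n t)^2 + 2*(l t)*(m t) - 4*ρ*(n t)*(l t + m t + n t)) t)
    (hneg : ∀ t ∈ I, m t + n t < 0)
    (t : ℝ) (ht : t ∈ I) :
    HasDerivAt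
      (fun s => -(l s) / (m s + n s) - (1/(2*(1 - 2*ρ))) * Real.log (-(m s) - n s))
      (2 * ((m t + n t)^2)⁻¹ *
        (l t * ((m t)^2 + (n t)^2) - (m t + n t)*(m t)*(n t)
          - (1/(2*(1 - 2*ρ)))*(m t + n t)*((m t)^2 + (n t)^2)
          - (1/(2*(1 - 2*ρ)))*(l t)*(m t + n t)^2
          + (ρ/(1 - 2*ρ))*(m t + n t)^2*(l t + m t + n t))) t := by
  have hmn : m t + n t ≠ 0 := (hneg t ht).ne
  have hρ' : 1 - 2 * ρ ≠ 0 := by linarith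
  have hΛ := hasDerivAt_neg_div_sub_mul_log_neg (1 / (2 * (1 - 2 * ρ)))
    (hl t ht) ((hm t ht).add (hn t ht)) hmn
  convert hΛ using 1
  · simp only [Pi.add_apply, neg_add']
  · simp only [Pi.add_apply]
    field_simp
    ring

theorem stmt_15 (ρ : ℝ) (hρ : ρ < 0) (I : Set ℝ) (hI : IsOpen I)
    (l m n : ℝ → ℝ)
    (hl : ∀ t ∈ I, HasDerivAt l
      (2*(l t)^2 + 2*(m t)*(n t) - 4*ρ*(l t)*(l t + m t + n t)) t)
    (hm : ∀ t ∈ I, HasDerivAt m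
      (2*(m t)^2 + 2*(l t)*(n t) - 4*ρ*(m t)*(l t + m t + n t)) t)
    (hn : ∀ t ∈ I, HasDerivAt n
      (2*(n t)^2 + 2*(l t)*(m t) - 4*ρ*(n t)*(l t + m t + n t)) t)
    (hord : ∀ t ∈ I, l t ≥ m t ∧ m t ≥ n t)
    (hneg : ∀ t ∈ I, m t + n t < 0)
    (t : ℝ) (ht : t ∈ I) :
    HasDerivAt
      (fun s => -(l s) / (m s + n s) - (1/(2*(1 - 2*ρ))) * Real.log (-(m s) - n s))
      (2 * ((m t + n t)^2)⁻¹ *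
        (l t * ((m t)^2 + (n t)^2) - (m t + n t)*(m t)*(n t)
          - (1/(2*(1 - 2*ρ)))*(m t + n t)*((m t)^2 + (n t)^2)
          - (1/(2*(1 - 2*ρ)))*(l t)*(m t + n t)^2
          + (ρ/(1 - 2*ρ))*(m t + n t)^2*(l t + m t + n t))) t :=
  stmt_15_general ρ hρ I l m n hl hm hn hneg t ht
end
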